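/- Let G' be a snark with an edge E = (U,V); let T_{−2}, T_2 be the neighbors of U other than V and W_{−2}, W_2 the neighbors of V other than U, and let G₀' = G' − {U,V}. Let G* be a snark disjoint from G', let u and v be distinct non-adjacent vertices of G*, let u_{−1}, u_0, u_1 be the neighbors of u and v_{−1}, v_0, v_1 the neighbors of v, and let G₀* = G* − {u,v}. Let G be the cubic graph consisting of G₀', G₀*, six new vertices T_i, W_i, i ∈ {−1,0,1}, and fourteen new edges (T_i, T_{i+1}) and (W_i, W_{i+1}) for i ∈ {−2,−1,0,1}, and (T_i, u_i) and (v_i, W_i) for i ∈ {−1,0,1}. Then G admits no edge-3-coloring. -/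

import Mathlib

namespace SnarkPaper

open SimpleGraph

/-- The color group `Z₂ × Z₂`. -/
abbrev Color : Type := ZMod 2 × ZMod 2

/-- The color `a = (0,1)`. -/
def colA : Color := (0, 1)
/-- The color `b = (1,0)`. -/
def colB : Color := (1, 0)
/-- The color `c = (1,1)`. -/
def colC : Color := (1, 1)

/-- The set of the three nonzero elements of `Z₂ × Z₂` used as colors. -/
def colorSet : Set Color := {colA, colB, colC}

variable {V V₁ V₂ : Type*}

/-- Two edges are adjacent if they are distinct and share an endpoint. -/
def EdgesAdj (e f : Sym2 V) : Prop := e ≠ f ∧ ∃ x, x ∈ e ∧ x ∈ f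

/-- The set of edge-3-colorings of `G`: functions assigning to each edge of `G` one of the
three nonzero elements of `Z₂ × Z₂` so that adjacent edges get distinct values (and pinned
to `0` off the edge set, so that counting colorings is faithful). -/
def EC (G : SimpleGraph V) : Set (Sym2 V → Color) :=
  {γ | (∀ e ∈ G.edgeSet, γ e ∈ colorSet) ∧ (∀ e ∉ G.edgeSet, γ e = 0) ∧
       ∀ e ∈ G.edgeSet, ∀ f ∈ G.edgeSet, EdgesAdj e f → γ e ≠ γ f}

/-- The set of 3-edge-decompositions of `G`: partitions of the edge set of `G` into three
classes such that no two adjacent edges lie in the same class. -/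
def ED (G : SimpleGraph V) : Set (Set (Set (Sym2 V))) :=
  {D | D.ncard = 3 ∧ (∀ s ∈ D, s ⊆ G.edgeSet) ∧
       (∀ e ∈ G.edgeSet, ∃! s, s ∈ D ∧ e ∈ s) ∧
       (∀ s ∈ D, ∀ e ∈ s, ∀ f ∈ s, ¬ EdgesAdj e f)}

/-- Two edges lie in the same class of the decomposition `D`. -/
def SameClass (D : Set (Set (Sym2 V))) (e f : Sym2 V) : Prop :=
  ∃ s ∈ D, e ∈ s ∧ f ∈ s

/-- A graph is cubic if every vertex has degree 3. -/
def IsCubic (G : SimpleGraph V) : Prop := ∀ v, (G.neighborSet v).ncard = 3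

/-- A graph is quasi-cubic if every vertex has degree 1 or 3. -/
def IsQuasiCubic (G : SimpleGraph V) : Prop :=
  ∀ v, (G.neighborSet v).ncard = 1 ∨ (G.neighborSet v).ncard = 3

/-- `G` is cyclically `n`-edge-connected: for any two vertex-disjoint cycles `C₁`, `C₂` and
any set `S` of at most `n-1` edges of `G` containing no edge of `C₁` or `C₂`, deleting `S`
leaves a path from a vertex of `C₁` to a vertex of `C₂`. -/
def CyclicallyEdgeConnected (G : SimpleGraph V) (n : ℕ) : Prop :=
  ∀ ⦃x y : V⦄ (C₁ : G.Walk x x) (C₂ : G.Walk y y), C₁.IsCycle → C₂.IsCycle →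
    (∀ w, w ∈ C₁.support → w ∉ C₂.support) →
    ∀ S : Set (Sym2 V), S ⊆ G.edgeSet → S.ncard ≤ n - 1 →
      (∀ e ∈ S, e ∉ C₁.edges ∧ e ∉ C₂.edges) →
      ∃ x' ∈ C₁.support, ∃ y' ∈ C₂.support, (G.deleteEdges S).Reachable x' y'

/-- A snark: a connected cubic graph with girth at least 5 which is cyclically
4-edge-connected and admits no edge-3-coloring. -/
def IsSnark (G : SimpleGraph V) : Prop :=
  G.Connected ∧ IsCubic G ∧ 5 ≤ G.girth ∧ CyclicallyEdgeConnected G 4 ∧ EC G = ∅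

/-- The edges `d₁` and `d₂` lie in a common (two-colored) Kempe cycle for the coloring `γ`. -/
def InCommonKempeCycle (G : SimpleGraph V) (γ : Sym2 V → Color) (d₁ d₂ : Sym2 V) : Prop :=
  ∃ x ∈ colorSet, ∃ y ∈ colorSet, x ≠ y ∧
    ∃ (a : V) (C : G.Walk a a), C.IsCycle ∧
      (∀ e ∈ C.edges, γ e = x ∨ γ e = y) ∧ d₁ ∈ C.edges ∧ d₂ ∈ C.edges

/-- Two edges of `G` are orthogonal if no edge-3-coloring of `G` puts them in a common
Kempe cycle. -/
def OrthogonalEdges (G : SimpleGraph V) (d₁ d₂ : Sym2 V) : Prop :=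
  d₁ ∈ G.edgeSet ∧ d₂ ∈ G.edgeSet ∧ ∀ γ ∈ EC G, ¬ InCommonKempeCycle G γ d₁ d₂

/-- The graph `G_e` for the edge `e = s(u,v)`: delete `u`, `v` and the five edges incident
to them (leaving `u` and `v` as isolated vertices), and add the new edge `d₁` joining the two
other neighbors of `u` and the new edge `d₂` joining the two other neighbors of `v`. -/
def edgeDeleted (G : SimpleGraph V) (u v : V) : SimpleGraph V :=
  SimpleGraph.fromEdgeSet
    ({e ∈ G.edgeSet | u ∉ e ∧ v ∉ e} ∪
     {e | ∃ x y, e = s(x, y) ∧ x ≠ y ∧ G.Adj u x ∧ G.Adj u y ∧ x ≠ v ∧ y ≠ v} ∪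
     {e | ∃ x y, e = s(x, y) ∧ x ≠ y ∧ G.Adj v x ∧ G.Adj v y ∧ x ≠ u ∧ y ≠ u})


/-- The superposed graph `G` of Context 5.2: the edge `E = (U,V)` of the snark `G'` is
replaced by the snark `G*` with two non-adjacent vertices `u`, `v` split into strands.
The six new vertices are `T_{-1}, T_0, T_1, W_{-1}, W_0, W_1`, encoded as
`Fin 6` elements `0,1,2,3,4,5` respectively; `Tm2, T2` are the neighbors of `U` other
than `V`, and `Wm2, W2` the neighbors of `V` other than `U`; `um, u0, up` are the
neighbors of `u` and `vm, v0, vp` the neighbors of `v` in `G*`. -/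
def superposed (G1 : SimpleGraph V₁) (G2 : SimpleGraph V₂)
    (U W : V₁) (Tm2 T2 Wm2 W2 : V₁) (u v um u0 up vm v0 vp : V₂) :
    SimpleGraph (V₁ ⊕ V₂ ⊕ Fin 6) :=
  SimpleGraph.fromEdgeSet
    ((Sym2.map (Sum.inl : V₁ → V₁ ⊕ V₂ ⊕ Fin 6)) '' {e ∈ G1.edgeSet | U ∉ e ∧ W ∉ e} ∪
     (Sym2.map (fun x => (Sum.inr (Sum.inl x) : V₁ ⊕ V₂ ⊕ Fin 6))) ''
        {e ∈ G2.edgeSet | u ∉ e ∧ v ∉ e} ∪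
     {s(Sum.inl Tm2, Sum.inr (Sum.inr 0)),
      s(Sum.inr (Sum.inr 0), Sum.inr (Sum.inr 1)),
      s(Sum.inr (Sum.inr 1), Sum.inr (Sum.inr 2)),
      s(Sum.inr (Sum.inr 2), Sum.inl T2),
      s(Sum.inl Wm2, Sum.inr (Sum.inr 3)),
      s(Sum.inr (Sum.inr 3), Sum.inr (Sum.inr 4)),
      s(Sum.inr (Sum.inr 4), Sum.inr (Sum.inr 5)),
      s(Sum.inr (Sum.inr 5), Sum.inl W2),
      s(Sum.inr (Sum.inr 0), Sum.inr (Sum.inl um)),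
      s(Sum.inr (Sum.inr 1), Sum.inr (Sum.inl u0)),
      s(Sum.inr (Sum.inr 2), Sum.inr (Sum.inl up)),
      s(Sum.inr (Sum.inl vm), Sum.inr (Sum.inr 3)),
      s(Sum.inr (Sum.inl v0), Sum.inr (Sum.inr 4)),
      s(Sum.inr (Sum.inl vp), Sum.inr (Sum.inr 5))})

/-!
Let `σ` be the sum, in `Z₂ × Z₂`, of the colours of the three edges joining `T_{-1}, T_0, T_1`
to `G₀*`. The colours at a vertex of a cubic graph are the three nonzero elements, so they add up
to `0`; summing this over the vertices of `G₀*` shows that the three edges joining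
`W_{-1}, W_0, W_1` to `G₀*` also have colour sum `σ`, and summing it over `T_{-1}, T_0, T_1`
shows that the end edges `T_{-2}T_{-1}` and `T_1T_2` of the strand have colours adding up to `σ`
(likewise for the `W`-strand).

If `σ = 0`, the three edges on either side of `G₀*` carry distinct colours, and moving them to
the edges at `u` and `v` colours `G*`. If `σ ≠ 0`, the end edges of each strand carry distinct
colours; moving them to the edges at `U` and `V` and colouring `UV` with `σ` colours `G'`.
-/

theorem mem_colorSet_iff_ne_zero {x : Color} : x ∈ colorSet ↔ x ≠ 0 := by
  simp only [colorSet, colA, colB, colC, Set.mem_insert_iff, Set.mem_singleton_iff]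
  revert x
  decide

theorem add_add_eq_zero_iff_pairwise_ne {x y z : Color} (hx : x ≠ 0) (hy : y ≠ 0) (hz : z ≠ 0) :
    x + y + z = 0 ↔ x ≠ y ∧ x ≠ z ∧ y ≠ z := by
  have key : ∀ x y z : Color, x ≠ 0 ∧ y ≠ 0 ∧ z ≠ 0 →
      (x + y + z = 0 ↔ x ≠ y ∧ x ≠ z ∧ y ≠ z) := by
    decide
  exact key x y z ⟨hx, hy, hz⟩

section Colorings

variable {G : SimpleGraph V} {γ : Sym2 V → Color}

theorem EC.apply_ne_zero (hγ : γ ∈ EC G) {p q : V} (h : G.Adj p q) : γ s(p, q) ≠ 0 :=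
  mem_colorSet_iff_ne_zero.mp (hγ.1 _ h)

theorem EC.apply_ne_apply (hγ : γ ∈ EC G) {p q r : V} (hq : G.Adj p q) (hr : G.Adj p r)
    (hqr : q ≠ r) : γ s(p, q) ≠ γ s(p, r) :=
  hγ.2.2 _ hq _ hr ⟨fun h => hqr (Sym2.congr_right.mp h), p, Sym2.mem_mk_left _ _,
    Sym2.mem_mk_left _ _⟩

theorem EC.add_add_eq_zero (hγ : γ ∈ EC G) {p a b c : V} (ha : G.Adj p a) (hb : G.Adj p b)
    (hc : G.Adj p c) (hab : a ≠ b) (hac : a ≠ c) (hbc : b ≠ c) :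
    γ s(p, a) + γ s(p, b) + γ s(p, c) = 0 :=
  (add_add_eq_zero_iff_pairwise_ne (apply_ne_zero hγ ha) (apply_ne_zero hγ hb)
    (apply_ne_zero hγ hc)).mpr
    ⟨apply_ne_apply hγ ha hb hab, apply_ne_apply hγ ha hc hac, apply_ne_apply hγ hb hc hbc⟩

/-- Adding the vertex equations at `p₀, p₁, p₂` cancels the inner edges `p₀p₁`, `p₁p₂`. -/
theorem EC.strand_sum_eq_zero (hγ : γ ∈ EC G) {a p₀ p₁ p₂ b q₀ q₁ q₂ : V}
    (ha : G.Adj p₀ a) (h₀₁ : G.Adj p₀ p₁) (h₁₂ : G.Adj p₁ p₂) (hb : G.Adj p₂ b)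
    (hq₀ : G.Adj p₀ q₀) (hq₁ : G.Adj p₁ q₁) (hq₂ : G.Adj p₂ q₂)
    (ha₁ : a ≠ p₁) (haq₀ : a ≠ q₀) (h₁q₀ : p₁ ≠ q₀) (h₀₂ : p₀ ≠ p₂) (h₀q₁ : p₀ ≠ q₁)
    (h₂q₁ : p₂ ≠ q₁) (h₁b : p₁ ≠ b) (h₁q₂ : p₁ ≠ q₂) (hbq₂ : b ≠ q₂) :
    γ s(p₀, q₀) + γ s(p₁, q₁) + γ s(p₂, q₂) + γ s(p₀, a) + γ s(p₂, b) = 0 := by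
  have h₀ := add_add_eq_zero hγ ha h₀₁ hq₀ ha₁ haq₀ h₁q₀
  have h₁ := add_add_eq_zero hγ h₀₁.symm h₁₂ hq₁ h₀₂ h₀q₁ h₂q₁
  have h₂ := add_add_eq_zero hγ h₁₂.symm hb hq₂ h₁b h₁q₂ hbq₂
  rw [Sym2.eq_swap (a := p₁)] at h₁
  rw [Sym2.eq_swap (a := p₂)] at h₂
  linear_combination h₀ + h₁ + h₂ - CharTwo.add_self_eq_zero (γ s(p₀, p₁)) -
    CharTwo.add_self_eq_zero (γ s(p₁, p₂))

end Colorings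

/-- `c x y` is the colour of the edge `xy` read at its end `x`. -/
def IsProperAt (G : SimpleGraph V) (c : V → V → Color) (x : V) : Prop :=
  (∀ y, G.Adj x y → c x y ≠ 0) ∧ ∀ y z, G.Adj x y → G.Adj x z → y ≠ z → c x y ≠ c x z

section DartColorings

variable {G : SimpleGraph V} {c : V → V → Color}

theorem nonempty_EC_of_isProperAt (hsymm : ∀ x y, G.Adj x y → c x y = c y x)
    (hc : ∀ x, IsProperAt G c x) : (EC G).Nonempty := by
  classical
  let γ : Sym2 V → Color := Sym2.lift ⟨fun x y => if G.Adj x y then c x y else 0, fun x y => by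
    by_cases h : G.Adj x y
    · simp [h, h.symm, hsymm x y h]
    · simp [h, G.adj_comm]⟩
  have hγ : ∀ x y, G.Adj x y → γ s(x, y) = c x y := fun x y h => by simp [γ, h]
  refine ⟨γ, ?_, ?_, ?_⟩
  · rintro ⟨x, y⟩ h
    rw [mem_colorSet_iff_ne_zero, hγ x y h]
    exact (hc x).1 y h
  · rintro ⟨x, y⟩ h
    simp [γ, show ¬ G.Adj x y from h]
  · rintro e he f hf ⟨hef, x, hxe, hxf⟩
    obtain ⟨y, rfl⟩ := Sym2.mem_iff_exists.mp hxe
    obtain ⟨z, rfl⟩ := Sym2.mem_iff_exists.mp hxf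
    rw [hγ x y he, hγ x z hf]
    exact (hc x).2 y z he hf fun h => hef (h ▸ rfl)

theorem IsProperAt.of_neighborSet_eq {x a b d : V} (h : G.neighborSet x = {a, b, d})
    (hne : ∀ y, G.Adj x y → c x y ≠ 0) (hsum : c x a + c x b + c x d = 0) :
    IsProperAt G c x := by
  have hN : ∀ y, G.Adj x y → y = a ∨ y = b ∨ y = d := fun y hy => by
    rwa [← mem_neighborSet, h] at hy
  have hadj : ∀ y ∈ ({a, b, d} : Set V), G.Adj x y := fun y hy => by
    rwa [← mem_neighborSet, h]
  obtain ⟨hab, had, hbd⟩ := (add_add_eq_zero_iff_pairwise_ne (hne a (hadj a (by simp)))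
    (hne b (hadj b (by simp))) (hne d (hadj d (by simp)))).mp hsum
  refine ⟨hne, fun y z hy hz hyz => ?_⟩
  rcases hN y hy with rfl | rfl | rfl <;> rcases hN z hz with rfl | rfl | rfl <;>
    first | exact absurd rfl hyz | assumption | exact Ne.symm ‹_›

theorem isProperAt_of_EC {V' : Type*} {H : SimpleGraph V'} {γ : Sym2 V' → Color} (hγ : γ ∈ EC H)
    {x : V} {p : V'} {ι : V → V'} (hadj : ∀ y, G.Adj x y → H.Adj p (ι y))
    (hinj : Set.InjOn ι (G.neighborSet x)) (hc : ∀ y, G.Adj x y → c x y = γ s(p, ι y)) :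
    IsProperAt G c x :=
  ⟨fun y hy => hc y hy ▸ EC.apply_ne_zero hγ (hadj y hy), fun y z hy hz hyz =>
    hc y hy ▸ hc z hz ▸ EC.apply_ne_apply hγ (hadj y hy) (hadj z hz) fun h => hyz (hinj hy hz h)⟩

theorem IsCubic.neighborSet_eq (hG : IsCubic G) {x a b d : V} (ha : G.Adj x a) (hb : G.Adj x b)
    (hd : G.Adj x d) (hab : a ≠ b) (had : a ≠ d) (hbd : b ≠ d) : G.neighborSet x = {a, b, d} := by
  refine (Set.eq_of_subset_of_ncard_le ?_ ?_ (Set.finite_of_ncard_ne_zero (by simp [hG x]))).symm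
  · simp [Set.insert_subset_iff, ha, hb, hd]
  · rw [hG x, Set.ncard_eq_three.mpr ⟨a, b, d, hab, had, hbd, rfl⟩]

section Sums

variable [Fintype V] [DecidableRel G.Adj]

theorem sum_neighborFinset_of_neighborSet_eq [DecidableEq V] {x a b d : V}
    (h : G.neighborSet x = {a, b, d}) (hab : a ≠ b) (had : a ≠ d) (hbd : b ≠ d) (f : V → Color) :
    ∑ y ∈ G.neighborFinset x, f y = f a + f b + f d := by
  have : G.neighborFinset x = {a, b, d} := by
    ext y
    rw [mem_neighborFinset, ← mem_neighborSet, h]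
    simp
  rw [this, Finset.sum_insert (by simp [hab, had]), Finset.sum_pair hbd, add_assoc]

theorem sum_neighborFinset_eq_zero_of_isProperAt {x : V} (hx : (G.neighborSet x).ncard = 3)
    (hc : IsProperAt G c x) : ∑ y ∈ G.neighborFinset x, c x y = 0 := by
  classical
  obtain ⟨a, b, d, hab, had, hbd, h⟩ := Set.ncard_eq_three.mp hx
  have hmem : ∀ y ∈ ({a, b, d} : Set V), G.Adj x y := fun y hy => by rwa [← h] at hy
  have ha := hmem a (by simp)
  have hb := hmem b (by simp)
  have hd := hmem d (by simp)
  rw [sum_neighborFinset_of_neighborSet_eq h hab had hbd,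
    add_add_eq_zero_iff_pairwise_ne (hc.1 a ha) (hc.1 b hb) (hc.1 d hd)]
  exact ⟨hc.2 a b ha hb hab, hc.2 a d ha hd had, hc.2 b d hb hd hbd⟩

theorem sum_sum_neighborFinset_eq_zero (hsymm : ∀ x y, G.Adj x y → c x y = c y x) :
    ∑ x, ∑ y ∈ G.neighborFinset x, c x y = 0 := by
  simp only [neighborFinset_eq_filter, Finset.sum_filter]
  rw [← Fintype.sum_prod_type' fun x y => if G.Adj x y then c x y else 0]
  refine Finset.sum_involution (fun p _ => p.swap) (fun p _ => ?_) (fun p _ hp h => ?_)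
    (fun _ _ => Finset.mem_univ _) (fun _ _ => rfl)
  · by_cases h : G.Adj p.1 p.2
    · simp only [Prod.fst_swap, Prod.snd_swap, if_pos h, if_pos h.symm, hsymm _ _ h]
      exact CharTwo.add_self_eq_zero _
    · simp [h, G.adj_comm]
  · have hadj : G.Adj p.1 p.2 := by
      by_contra hn
      exact hp (if_neg hn)
    exact hadj.ne (congrArg Prod.fst h).symm

/-- The parity lemma. -/
theorem sum_sum_neighborFinset_eq_zero_of_isProperAt (hG : IsCubic G)
    (hsymm : ∀ x y, G.Adj x y → c x y = c y x) (T : Finset V) (hc : ∀ x ∉ T, IsProperAt G c x) :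
    ∑ x ∈ T, ∑ y ∈ G.neighborFinset x, c x y = 0 := by
  rw [Finset.sum_subset (Finset.subset_univ T) fun x _ hx =>
    sum_neighborFinset_eq_zero_of_isProperAt (hG x) (hc x hx)]
  exact sum_sum_neighborFinset_eq_zero hsymm

end Sums

end DartColorings

structure SuperpositionData (V₁ V₂ : Type*) where
  G1 : SimpleGraph V₁
  G2 : SimpleGraph V₂
  U : V₁
  W : V₁
  Tm2 : V₁
  T2 : V₁
  Wm2 : V₁
  W2 : V₁
  u : V₂
  v : V₂
  um : V₂
  u0 : V₂
  up : V₂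
  vm : V₂
  v0 : V₂
  vp : V₂
  neighborSet_U : G1.neighborSet U = {W, Tm2, T2}
  neighborSet_W : G1.neighborSet W = {U, Wm2, W2}
  Tm2_ne_T2 : Tm2 ≠ T2
  Tm2_ne_W : Tm2 ≠ W
  T2_ne_W : T2 ≠ W
  Wm2_ne_W2 : Wm2 ≠ W2
  Wm2_ne_U : Wm2 ≠ U
  W2_ne_U : W2 ≠ U
  neighborSet_u : G2.neighborSet u = {um, u0, up}
  neighborSet_v : G2.neighborSet v = {vm, v0, vp}
  um_ne_u0 : um ≠ u0
  um_ne_up : um ≠ up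
  u0_ne_up : u0 ≠ up
  vm_ne_v0 : vm ≠ v0
  vm_ne_vp : vm ≠ vp
  v0_ne_vp : v0 ≠ vp
  u_ne_v : u ≠ v
  not_adj_uv : ¬ G2.Adj u v

/-- The new vertex `T_{-1}, T_0, T_1, W_{-1}, W_0, W_1` for `i = 0, …, 5`. -/
abbrev newVert (i : Fin 6) : V₁ ⊕ V₂ ⊕ Fin 6 := Sum.inr (Sum.inr i)

abbrev vert₂ (z : V₂) : V₁ ⊕ V₂ ⊕ Fin 6 := Sum.inr (Sum.inl z)

namespace SuperpositionData

variable (D : SuperpositionData V₁ V₂)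

def graph : SimpleGraph (V₁ ⊕ V₂ ⊕ Fin 6) :=
  superposed D.G1 D.G2 D.U D.W D.Tm2 D.T2 D.Wm2 D.W2 D.u D.v D.um D.u0 D.up D.vm D.v0 D.vp

theorem graph_adj_inl {x y : V₁} (h : D.G1.Adj x y) (hxU : x ≠ D.U) (hxW : x ≠ D.W)
    (hyU : y ≠ D.U) (hyW : y ≠ D.W) : D.graph.Adj (Sum.inl x) (Sum.inl y) := by
  refine ⟨Or.inl (Or.inl ⟨s(x, y), ⟨h, ?_, ?_⟩, rfl⟩), by simpa using h.ne⟩ <;>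
    simp [Sym2.mem_iff, hxU.symm, hxW.symm, hyU.symm, hyW.symm]

theorem graph_adj_vert₂ {z w : V₂} (h : D.G2.Adj z w) (hzu : z ≠ D.u) (hzv : z ≠ D.v)
    (hwu : w ≠ D.u) (hwv : w ≠ D.v) : D.graph.Adj (vert₂ z) (vert₂ w) := by
  refine ⟨Or.inl (Or.inr ⟨s(z, w), ⟨h, ?_, ?_⟩, rfl⟩), by simpa using h.ne⟩ <;>
    simp [Sym2.mem_iff, hzu.symm, hzv.symm, hwu.symm, hwv.symm]

theorem adj_U_W : D.G1.Adj D.U D.W := by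
  rw [← mem_neighborSet, D.neighborSet_U]
  exact Set.mem_insert _ _

theorem ne_u_and_ne_v_of_adj_u {y : V₂} (h : D.G2.Adj D.u y) : y ≠ D.u ∧ y ≠ D.v :=
  ⟨h.ne.symm, fun e => D.not_adj_uv (e ▸ h)⟩

theorem ne_u_and_ne_v_of_adj_v {y : V₂} (h : D.G2.Adj D.v y) : y ≠ D.u ∧ y ≠ D.v :=
  ⟨fun e => D.not_adj_uv (e ▸ h.symm), h.ne.symm⟩

open Classical in
/-- The vertex of `D.graph` at which the edge `zw` of `G2` ends on the side of `z`. -/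
noncomputable def end₂ (z w : V₂) : V₁ ⊕ V₂ ⊕ Fin 6 :=
  if z = D.u then (if w = D.um then newVert 0 else if w = D.u0 then newVert 1 else newVert 2)
  else if z = D.v then (if w = D.vm then newVert 3 else if w = D.v0 then newVert 4 else newVert 5)
  else vert₂ z

theorem end₂_of_ne {z : V₂} (hu : z ≠ D.u) (hv : z ≠ D.v) (w : V₂) : D.end₂ z w = vert₂ z := by
  simp [end₂, hu, hv]

theorem end₂_left_injective (w : V₂) : Function.Injective (D.end₂ · w) := by
  intro z z' h
  simp only [end₂] at h
  have := D.u_ne_v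
  split_ifs at h <;> simp_all

theorem graph_adj_end₂ {z w : V₂} (h : D.G2.Adj z w) (hu : z ≠ D.u) (hv : z ≠ D.v) :
    D.graph.Adj (vert₂ z) (D.end₂ w z) := by
  by_cases hwu : w = D.u
  · have hz : z ∈ D.G2.neighborSet D.u := hwu ▸ h.symm
    rw [D.neighborSet_u] at hz
    rcases hz with rfl | rfl | rfl <;>
      simp only [hwu, end₂, if_true, D.um_ne_u0.symm, D.um_ne_up.symm, D.u0_ne_up.symm,
        if_false] <;>
      exact ⟨Or.inr (by simp), by simp⟩
  by_cases hwv : w = D.v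
  · have hz : z ∈ D.G2.neighborSet D.v := hwv ▸ h.symm
    rw [D.neighborSet_v] at hz
    rcases hz with rfl | rfl | rfl <;>
      simp only [hwv, end₂, D.u_ne_v.symm, if_true, D.vm_ne_v0.symm, D.vm_ne_vp.symm,
        D.v0_ne_vp.symm, if_false] <;>
      exact ⟨Or.inr (by simp), by simp⟩
  rw [D.end₂_of_ne hwu hwv]
  exact D.graph_adj_vert₂ h hu hv hwu hwv

open Classical in
/-- The vertex of `D.graph` at which the edge `xy` of `G1` ends on the side of `x`. -/
noncomputable def end₁ (x y : V₁) : V₁ ⊕ V₂ ⊕ Fin 6 :=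
  if x = D.U then (if y = D.Tm2 then newVert 0 else newVert 2)
  else if x = D.W then (if y = D.Wm2 then newVert 3 else newVert 5)
  else Sum.inl x

theorem end₁_U_Tm2 : D.end₁ D.U D.Tm2 = newVert 0 := by simp [end₁]

theorem end₁_U_T2 : D.end₁ D.U D.T2 = newVert 2 := by simp [end₁, D.Tm2_ne_T2.symm]

theorem end₁_W_Wm2 : D.end₁ D.W D.Wm2 = newVert 3 := by simp [end₁, D.adj_U_W.ne.symm]

theorem end₁_W_W2 : D.end₁ D.W D.W2 = newVert 5 := by
  simp [end₁, D.adj_U_W.ne.symm, D.Wm2_ne_W2.symm]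

theorem end₁_of_ne {x : V₁} (hU : x ≠ D.U) (hW : x ≠ D.W) (y : V₁) : D.end₁ x y = Sum.inl x := by
  simp [end₁, hU, hW]

theorem end₁_left_injective (y : V₁) : Function.Injective (D.end₁ · y) := by
  intro x x' h
  have := D.adj_U_W.ne
  simp only [end₁] at h
  split_ifs at h <;> simp_all

theorem graph_adj_end₁ {x y : V₁} (h : D.G1.Adj x y) (hU : x ≠ D.U) (hW : x ≠ D.W) :
    D.graph.Adj (Sum.inl x) (D.end₁ y x) := by
  by_cases hyU : y = D.U
  · have hx : x ∈ D.G1.neighborSet D.U := hyU ▸ h.symm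
    rw [D.neighborSet_U] at hx
    rcases hx with rfl | rfl | rfl
    · exact absurd rfl hW
    · rw [hyU, end₁_U_Tm2]
      exact ⟨Or.inr (by simp), by simp⟩
    · rw [hyU, end₁_U_T2]
      exact ⟨Or.inr (by simp), by simp⟩
  by_cases hyW : y = D.W
  · have hx : x ∈ D.G1.neighborSet D.W := hyW ▸ h.symm
    rw [D.neighborSet_W] at hx
    rcases hx with rfl | rfl | rfl
    · exact absurd rfl hU
    · rw [hyW, end₁_W_Wm2]
      exact ⟨Or.inr (by simp), by simp⟩
    · rw [hyW, end₁_W_W2]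
      exact ⟨Or.inr (by simp), by simp⟩
  rw [D.end₁_of_ne hyU hyW]
  exact D.graph_adj_inl h hU hW hyU hyW

variable (γ : Sym2 (V₁ ⊕ V₂ ⊕ Fin 6) → Color)

noncomputable def color₂ (x y : V₂) : Color := γ s(D.end₂ x y, D.end₂ y x)

theorem color₂_symm (x y : V₂) : D.color₂ γ x y = D.color₂ γ y x := by
  rw [color₂, color₂, Sym2.eq_swap]

def sumU : Color :=
  γ s(newVert 0, vert₂ D.um) + γ s(newVert 1, vert₂ D.u0) + γ s(newVert 2, vert₂ D.up)

def sumV : Color :=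
  γ s(newVert 3, vert₂ D.vm) + γ s(newVert 4, vert₂ D.v0) + γ s(newVert 5, vert₂ D.vp)

theorem color₂_u_add :
    D.color₂ γ D.u D.um + D.color₂ γ D.u D.u0 + D.color₂ γ D.u D.up = D.sumU γ := by
  have hend : ∀ y ∈ ({D.um, D.u0, D.up} : Set V₂), D.end₂ y D.u = vert₂ y := fun y hy =>
    have hy := D.ne_u_and_ne_v_of_adj_u (by rwa [← mem_neighborSet, D.neighborSet_u])
    D.end₂_of_ne hy.1 hy.2 _
  simp only [color₂, hend D.um (by simp), hend D.u0 (by simp), hend D.up (by simp)]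
  simp only [end₂, if_true, D.um_ne_u0.symm, D.um_ne_up.symm, D.u0_ne_up.symm, if_false, sumU]

theorem color₂_v_add :
    D.color₂ γ D.v D.vm + D.color₂ γ D.v D.v0 + D.color₂ γ D.v D.vp = D.sumV γ := by
  have hend : ∀ y ∈ ({D.vm, D.v0, D.vp} : Set V₂), D.end₂ y D.v = vert₂ y := fun y hy =>
    have hy := D.ne_u_and_ne_v_of_adj_v (by rwa [← mem_neighborSet, D.neighborSet_v])
    D.end₂_of_ne hy.1 hy.2 _
  simp only [color₂, hend D.vm (by simp), hend D.v0 (by simp), hend D.vp (by simp)]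
  simp only [end₂, D.u_ne_v.symm, if_true, D.vm_ne_v0.symm, D.vm_ne_vp.symm, D.v0_ne_vp.symm,
    if_false, sumV]

open Classical in
/-- The edge `UW` has no counterpart in `D.graph`; it gets the colour `D.sumU γ`. -/
noncomputable def color₁ (x y : V₁) : Color :=
  if s(x, y) = s(D.U, D.W) then D.sumU γ else γ s(D.end₁ x y, D.end₁ y x)

theorem color₁_symm (x y : V₁) : D.color₁ γ x y = D.color₁ γ y x := by
  rw [color₁, color₁, Sym2.eq_swap (a := x), Sym2.eq_swap (a := D.end₁ x y)]

theorem color₁_U_W : D.color₁ γ D.U D.W = D.sumU γ := if_pos rfl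

theorem color₁_U_add : D.color₁ γ D.U D.W + D.color₁ γ D.U D.Tm2 + D.color₁ γ D.U D.T2 =
    D.sumU γ + γ s(newVert 0, Sum.inl D.Tm2) + γ s(newVert 2, Sum.inl D.T2) := by
  have hTm2 : D.G1.Adj D.U D.Tm2 := by rw [← mem_neighborSet, D.neighborSet_U]; simp
  have hT2 : D.G1.Adj D.U D.T2 := by rw [← mem_neighborSet, D.neighborSet_U]; simp
  rw [color₁_U_W, color₁, color₁, if_neg fun h => D.Tm2_ne_W (Sym2.congr_right.mp h),
    if_neg fun h => D.T2_ne_W (Sym2.congr_right.mp h), end₁_U_Tm2, end₁_U_T2,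
    D.end₁_of_ne hTm2.ne.symm D.Tm2_ne_W, D.end₁_of_ne hT2.ne.symm D.T2_ne_W]

theorem color₁_W_add : D.color₁ γ D.W D.U + D.color₁ γ D.W D.Wm2 + D.color₁ γ D.W D.W2 =
    D.sumU γ + γ s(newVert 3, Sum.inl D.Wm2) + γ s(newVert 5, Sum.inl D.W2) := by
  have hWm2 : D.G1.Adj D.W D.Wm2 := by rw [← mem_neighborSet, D.neighborSet_W]; simp
  have hW2 : D.G1.Adj D.W D.W2 := by rw [← mem_neighborSet, D.neighborSet_W]; simp
  have hUW := D.adj_U_W.ne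
  rw [color₁_symm, color₁_U_W, color₁, color₁, if_neg (by simp [hUW.symm, D.Wm2_ne_U]),
    if_neg (by simp [hUW.symm, D.W2_ne_U]), end₁_W_Wm2, end₁_W_W2,
    D.end₁_of_ne D.Wm2_ne_U hWm2.ne.symm, D.end₁_of_ne D.W2_ne_U hW2.ne.symm]

variable {γ}

theorem isProperAt_color₂ (hγ : γ ∈ EC D.graph) {z : V₂} (hu : z ≠ D.u) (hv : z ≠ D.v) :
    IsProperAt D.G2 (D.color₂ γ) z :=
  isProperAt_of_EC hγ (fun _ h => D.graph_adj_end₂ h hu hv) (D.end₂_left_injective z).injOn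
    fun y _ => by rw [color₂, D.end₂_of_ne hu hv]

theorem color₂_ne_zero (hγ : γ ∈ EC D.graph) {x y : V₂} (h : D.G2.Adj x y) (hu : y ≠ D.u)
    (hv : y ≠ D.v) : D.color₂ γ x y ≠ 0 :=
  D.color₂_symm γ y x ▸ (D.isProperAt_color₂ hγ hu hv).1 x h.symm

theorem sumU_eq_sumV [Fintype V₂] (hG : IsCubic D.G2) (hγ : γ ∈ EC D.graph) :
    D.sumU γ = D.sumV γ := by
  classical
  have h := sum_sum_neighborFinset_eq_zero_of_isProperAt hG (fun x y _ => D.color₂_symm γ x y)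
    {D.u, D.v} fun z hz => by
      simp only [Finset.mem_insert, Finset.mem_singleton, not_or] at hz
      exact D.isProperAt_color₂ hγ hz.1 hz.2
  rwa [Finset.sum_pair D.u_ne_v,
    sum_neighborFinset_of_neighborSet_eq D.neighborSet_u D.um_ne_u0 D.um_ne_up D.u0_ne_up,
    sum_neighborFinset_of_neighborSet_eq D.neighborSet_v D.vm_ne_v0 D.vm_ne_vp D.v0_ne_vp,
    color₂_u_add, color₂_v_add, CharTwo.add_eq_zero] at h

theorem nonempty_EC_G2_of_sumU_eq_zero [Fintype V₂] (hG : IsCubic D.G2) (hγ : γ ∈ EC D.graph)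
    (hσ : D.sumU γ = 0) : (EC D.G2).Nonempty := by
  refine nonempty_EC_of_isProperAt (fun x y _ => D.color₂_symm γ x y) fun z => ?_
  by_cases hu : z = D.u
  · rw [hu]
    refine .of_neighborSet_eq D.neighborSet_u (fun y h => ?_) (by rw [color₂_u_add, hσ])
    exact D.color₂_ne_zero hγ h (D.ne_u_and_ne_v_of_adj_u h).1 (D.ne_u_and_ne_v_of_adj_u h).2
  by_cases hv : z = D.v
  · rw [hv]
    refine .of_neighborSet_eq D.neighborSet_v (fun y h => ?_)
      (by rw [color₂_v_add, ← D.sumU_eq_sumV hG hγ, hσ])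
    exact D.color₂_ne_zero hγ h (D.ne_u_and_ne_v_of_adj_v h).1 (D.ne_u_and_ne_v_of_adj_v h).2
  exact D.isProperAt_color₂ hγ hu hv

theorem sumU_add_strand (hγ : γ ∈ EC D.graph) :
    D.sumU γ + γ s(newVert 0, Sum.inl D.Tm2) + γ s(newVert 2, Sum.inl D.T2) = 0 := by
  unfold sumU
  refine EC.strand_sum_eq_zero hγ ?_ ?_ ?_ ?_ ?_ ?_ ?_ ?_ ?_ ?_ ?_ ?_ ?_ ?_ ?_ ?_ <;>
    first | exact ⟨Or.inr (by simp), by simp⟩ | simp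

theorem sumV_add_strand (hγ : γ ∈ EC D.graph) :
    D.sumV γ + γ s(newVert 3, Sum.inl D.Wm2) + γ s(newVert 5, Sum.inl D.W2) = 0 := by
  unfold sumV
  refine EC.strand_sum_eq_zero hγ ?_ ?_ ?_ ?_ ?_ ?_ ?_ ?_ ?_ ?_ ?_ ?_ ?_ ?_ ?_ ?_ <;>
    first | exact ⟨Or.inr (by simp), by simp⟩ | simp

theorem isProperAt_color₁ (hγ : γ ∈ EC D.graph) {x : V₁} (hU : x ≠ D.U) (hW : x ≠ D.W) :
    IsProperAt D.G1 (D.color₁ γ) x :=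
  isProperAt_of_EC hγ (fun _ h => D.graph_adj_end₁ h hU hW) (D.end₁_left_injective x).injOn
    fun y _ => by rw [color₁, if_neg (by simp [hU, hW]), D.end₁_of_ne hU hW]

theorem color₁_ne_zero (hγ : γ ∈ EC D.graph) {x y : V₁} (h : D.G1.Adj x y) (hU : y ≠ D.U)
    (hW : y ≠ D.W) : D.color₁ γ x y ≠ 0 :=
  D.color₁_symm γ y x ▸ (D.isProperAt_color₁ hγ hU hW).1 x h.symm

theorem nonempty_EC_G1_of_sumU_ne_zero [Fintype V₂] (hG : IsCubic D.G2) (hγ : γ ∈ EC D.graph)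
    (hσ : D.sumU γ ≠ 0) : (EC D.G1).Nonempty := by
  refine nonempty_EC_of_isProperAt (fun x y _ => D.color₁_symm γ x y) fun x => ?_
  by_cases hU : x = D.U
  · rw [hU]
    refine .of_neighborSet_eq D.neighborSet_U (fun y h => ?_)
      (by rw [color₁_U_add]; exact D.sumU_add_strand hγ)
    by_cases hyW : y = D.W
    · rwa [hyW, color₁_U_W]
    · exact D.color₁_ne_zero hγ h h.ne.symm hyW
  by_cases hW : x = D.W
  · rw [hW]
    refine .of_neighborSet_eq D.neighborSet_W (fun y h => ?_)
      (by rw [color₁_W_add, D.sumU_eq_sumV hG hγ]; exact D.sumV_add_strand hγ)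
    by_cases hyU : y = D.U
    · rwa [hyU, color₁_symm, color₁_U_W]
    · exact D.color₁_ne_zero hγ h hyU h.ne.symm
  exact D.isProperAt_color₁ hγ hU hW

theorem EC_graph_eq_empty [Fintype V₂] (hG2 : IsCubic D.G2) (h1 : EC D.G1 = ∅)
    (h2 : EC D.G2 = ∅) : EC D.graph = ∅ := by
  refine Set.eq_empty_of_forall_notMem fun γ hγ => ?_
  by_cases hσ : D.sumU γ = 0
  · exact (D.nonempty_EC_G2_of_sumU_eq_zero hG2 hγ hσ).ne_empty h2
  · exact (D.nonempty_EC_G1_of_sumU_ne_zero hG2 hγ hσ).ne_empty h1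

end SuperpositionData

theorem statement_15_general {V₁ V₂ : Type*} [Fintype V₂]
    (G1 : SimpleGraph V₁) (G2 : SimpleGraph V₂) (hG1 : IsSnark G1) (hG2 : IsSnark G2)
    (U W : V₁) (hUW : G1.Adj U W)
    (Tm2 T2 : V₁) (hTm2 : G1.Adj U Tm2) (hT2 : G1.Adj U T2) (hT : Tm2 ≠ T2)
    (hTm2W : Tm2 ≠ W) (hT2W : T2 ≠ W)
    (Wm2 W2 : V₁) (hWm2 : G1.Adj W Wm2) (hW2 : G1.Adj W W2) (hWd : Wm2 ≠ W2)
    (hWm2U : Wm2 ≠ U) (hW2U : W2 ≠ U)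
    (u v : V₂) (huv : u ≠ v) (hnadj : ¬ G2.Adj u v)
    (um u0 up : V₂) (hum : G2.Adj u um) (hu0 : G2.Adj u u0) (hup : G2.Adj u up)
    (humu0 : um ≠ u0) (humup : um ≠ up) (hu0up : u0 ≠ up)
    (vm v0 vp : V₂) (hvm : G2.Adj v vm) (hv0 : G2.Adj v v0) (hvp : G2.Adj v vp)
    (hvmv0 : vm ≠ v0) (hvmvp : vm ≠ vp) (hv0vp : v0 ≠ vp) :
    EC (superposed G1 G2 U W Tm2 T2 Wm2 W2 u v um u0 up vm v0 vp) = ∅ := by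
  obtain ⟨-, hcub1, -, -, hEC1⟩ := hG1
  obtain ⟨-, hcub2, -, -, hEC2⟩ := hG2
  exact SuperpositionData.EC_graph_eq_empty
    { G1, G2, U, W, Tm2, T2, Wm2, W2, u, v, um, u0, up, vm, v0, vp
      neighborSet_U := hcub1.neighborSet_eq hUW hTm2 hT2 hTm2W.symm hT2W.symm hT
      neighborSet_W := hcub1.neighborSet_eq hUW.symm hWm2 hW2 hWm2U.symm hW2U.symm hWd
      Tm2_ne_T2 := hT
      Tm2_ne_W := hTm2W
      T2_ne_W := hT2W
      Wm2_ne_W2 := hWd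
      Wm2_ne_U := hWm2U
      W2_ne_U := hW2U
      neighborSet_u := hcub2.neighborSet_eq hum hu0 hup humu0 humup hu0up
      neighborSet_v := hcub2.neighborSet_eq hvm hv0 hvp hvmv0 hvmvp hv0vp
      um_ne_u0 := humu0
      um_ne_up := humup
      u0_ne_up := hu0up
      vm_ne_v0 := hvmv0
      vm_ne_vp := hvmvp
      v0_ne_vp := hv0vp
      u_ne_v := huv
      not_adj_uv := hnadj }
    hcub2 hEC1 hEC2

/-- **Context 5.2 / Kochol superposition.** The graph `G` obtained from the snark `G'` by
superimposing the snark `G*` in place of the edge `E = (U,V)` admits no edge-3-coloring. -/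
theorem statement_15 {V₁ V₂ : Type*} [Fintype V₁] [Fintype V₂]
    (G1 : SimpleGraph V₁) (G2 : SimpleGraph V₂) (hG1 : IsSnark G1) (hG2 : IsSnark G2)
    (U W : V₁) (hUW : G1.Adj U W)
    (Tm2 T2 : V₁) (hTm2 : G1.Adj U Tm2) (hT2 : G1.Adj U T2) (hT : Tm2 ≠ T2)
    (hTm2W : Tm2 ≠ W) (hT2W : T2 ≠ W)
    (Wm2 W2 : V₁) (hWm2 : G1.Adj W Wm2) (hW2 : G1.Adj W W2) (hWd : Wm2 ≠ W2)
    (hWm2U : Wm2 ≠ U) (hW2U : W2 ≠ U)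
    (u v : V₂) (huv : u ≠ v) (hnadj : ¬ G2.Adj u v)
    (um u0 up : V₂) (hum : G2.Adj u um) (hu0 : G2.Adj u u0) (hup : G2.Adj u up)
    (humu0 : um ≠ u0) (humup : um ≠ up) (hu0up : u0 ≠ up)
    (vm v0 vp : V₂) (hvm : G2.Adj v vm) (hv0 : G2.Adj v v0) (hvp : G2.Adj v vp)
    (hvmv0 : vm ≠ v0) (hvmvp : vm ≠ vp) (hv0vp : v0 ≠ vp) :
    EC (superposed G1 G2 U W Tm2 T2 Wm2 W2 u v um u0 up vm v0 vp) = ∅ :=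
  statement_15_general G1 G2 hG1 hG2 U W hUW Tm2 T2 hTm2 hT2 hT hTm2W hT2W Wm2 W2 hWm2 hW2 hWd hWm2U
    hW2U u v huv hnadj um u0 up hum hu0 hup humu0 humup hu0up vm v0 vp hvm hv0 hvp hvmv0 hvmvp hv0vp

end SnarkPaper
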